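/- Fix σ > 0. Let Q be a set of Schwartz functions q : ℝ → ℂ that is bounded in L²(ℝ) and L²-equicontinuous, i.e., for every ε > 0 there exists δ > 0 such that sup_{q ∈ Q} sup_{|y| < δ} ‖q(· + y) − q(·)‖_{L²(ℝ)} < ε. Then lim_{κ → ∞} sup_{q ∈ Q} ∫_ℝ |ξ|^{2σ} (4κ² + ξ²)^{−σ} |q̂(ξ)|² dξ = 0. -/

import Mathlib

/-!
Since `q ↦ q̂` is unitary and turns translation by `y` into multiplication by `e^{iξy}`,
`‖q(· + y) - q‖₂² = ∫ (2 - 2 cos ξy) |q̂(ξ)|² dξ`. Averaging this over `y ∈ (0, δ)` bounds the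
Fourier mass of `q` on `|ξ| ≥ 2/δ` by the modulus of equicontinuity, uniformly over `Q`. The
weight `|ξ|^{2σ}(4κ² + ξ²)^{-σ}` is at most `1` everywhere and at most `(R / 2κ)^{2σ}` on
`|ξ| ≤ R`, so the high frequencies contribute little for every `κ`, and the low ones little once
`κ` is large, by the uniform `L²` bound.
-/

open MeasureTheory

/-- The Fourier transform, normalized by `q̂(ξ) = (2π)^{-1/2} ∫ e^{-iξx} q(x) dx`. -/
noncomputable def fhat (f : ℝ → ℂ) (ξ : ℝ) : ℂ :=
  ((Real.sqrt (2 * Real.pi) : ℂ))⁻¹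
    * ∫ x : ℝ, Complex.exp (-(Complex.I * (ξ : ℂ) * (x : ℂ))) * f x

open Real Set Filter Topology FourierTransform
open scoped Complex

lemma fhat_eq_fourier (f : ℝ → ℂ) (ξ : ℝ) :
    fhat f ξ = (√(2 * π) : ℂ)⁻¹ * 𝓕 f (ξ / (2 * π)) := by
  rw [fhat, Real.fourier_real_eq_integral_exp_smul]
  congr 1
  refine integral_congr_ae (.of_forall fun x => ?_)
  simp only [smul_eq_mul]
  congr 2
  push_cast
  field_simp

lemma norm_fhat_sq (f : ℝ → ℂ) (ξ : ℝ) :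
    ‖fhat f ξ‖ ^ 2 = (2 * π)⁻¹ * ‖𝓕 f (ξ / (2 * π))‖ ^ 2 := by
  rw [fhat_eq_fourier, norm_mul, mul_pow, norm_inv, Complex.norm_real, Real.norm_eq_abs,
    abs_of_nonneg (Real.sqrt_nonneg _), inv_pow, Real.sq_sqrt (by positivity)]

lemma integral_mul_norm_fhat_sq (g : ℝ → ℝ) (f : ℝ → ℂ) :
    ∫ ξ, g ξ * ‖fhat f ξ‖ ^ 2 = ∫ w, g (2 * π * w) * ‖𝓕 f w‖ ^ 2 := by
  have h2π : 0 < 2 * π := by positivity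
  have hpoint (w : ℝ) : g (2 * π * w) * ‖𝓕 f w‖ ^ 2 =
      2 * π * (g (2 * π * w) * ‖fhat f (2 * π * w)‖ ^ 2) := by
    rw [norm_fhat_sq, mul_div_cancel_left₀ _ h2π.ne']
    field_simp
  simp_rw [hpoint]
  rw [integral_const_mul, Measure.integral_comp_mul_left (fun ξ => g ξ * ‖fhat f ξ‖ ^ 2),
    abs_of_pos (inv_pos.2 h2π), smul_eq_mul, mul_inv_cancel_left₀ h2π.ne']

lemma integrable_norm_fhat_sq (q : SchwartzMap ℝ ℂ) : Integrable fun ξ => ‖fhat q ξ‖ ^ 2 := by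
  simp_rw [norm_fhat_sq]
  exact ((((𝓕 q).memLp 2).integrable_norm_pow two_ne_zero).comp_div
    (R := 2 * π) (by positivity)).const_mul _

theorem integral_norm_fhat_sq (q : SchwartzMap ℝ ℂ) : ∫ ξ, ‖fhat q ξ‖ ^ 2 = ∫ x, ‖q x‖ ^ 2 := by
  simpa [← SchwartzMap.fourier_coe, SchwartzMap.integral_norm_sq_fourier] using
    integral_mul_norm_fhat_sq (fun _ => 1) q

lemma fhat_comp_add_right (f : ℝ → ℂ) (y ξ : ℝ) :
    fhat (fun x => f (x + y)) ξ = cexp (Complex.I * ξ * y) * fhat f ξ := by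
  rw [fhat, fhat, ← integral_add_right_eq_self (fun x : ℝ => cexp (-(Complex.I * ξ * x)) * f x) y,
    mul_left_comm, ← integral_const_mul (cexp (Complex.I * ξ * y))]
  congr 1
  refine integral_congr_ae (.of_forall fun x => ?_)
  beta_reduce
  rw [← mul_assoc, ← Complex.exp_add]
  push_cast
  ring_nf

lemma fhat_sub {f g : ℝ → ℂ} (hf : Integrable f) (hg : Integrable g) (ξ : ℝ) :
    fhat (f - g) ξ = fhat f ξ - fhat g ξ := by
  have he : Continuous fun x : ℝ => cexp (-(Complex.I * ξ * x)) := by fun_prop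
  have hb (x : ℝ) : ‖cexp (-(Complex.I * ξ * x))‖ ≤ 1 := by
    rw [Complex.norm_exp]; simp
  rw [fhat, fhat, fhat, ← mul_sub, ← integral_sub]
  · simp only [Pi.sub_apply, mul_sub]
  · exact hf.bdd_mul he.aestronglyMeasurable (.of_forall hb)
  · exact hg.bdd_mul he.aestronglyMeasurable (.of_forall hb)

lemma norm_exp_mul_I_sub_one_sq (t : ℝ) : ‖cexp (t * Complex.I) - 1‖ ^ 2 = 2 - 2 * cos t := by
  rw [Complex.sq_norm, Complex.normSq_apply]
  simp only [Complex.sub_re, Complex.sub_im, Complex.one_re, Complex.one_im,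
    Complex.exp_ofReal_mul_I_re, Complex.exp_ofReal_mul_I_im]
  nlinarith [sin_sq_add_cos_sq t]

theorem integral_two_sub_two_cos_mul_norm_fhat_sq (q : SchwartzMap ℝ ℂ) (y : ℝ) :
    ∫ ξ, (2 - 2 * cos (ξ * y)) * ‖fhat q ξ‖ ^ 2 = ∫ x, ‖q (x + y) - q x‖ ^ 2 := by
  have hd : ⇑(SchwartzMap.compSubConstCLM ℂ (-y) q - q) = (fun x => q (x + y)) - ⇑q := by
    ext x; simp
  have hplancherel := integral_norm_fhat_sq (SchwartzMap.compSubConstCLM ℂ (-y) q - q)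
  rw [hd] at hplancherel
  simp only [Pi.sub_apply] at hplancherel
  rw [← hplancherel]
  congr 1 with ξ
  rw [fhat_sub (q.integrable.comp_add_right y) q.integrable, fhat_comp_add_right, ← sub_one_mul,
    norm_mul, mul_pow, ← norm_exp_mul_I_sub_one_sq]
  push_cast
  ring_nf

lemma integral_Ioo_two_sub_two_cos (ξ δ : ℝ) (hξ : ξ ≠ 0) (hδ : 0 ≤ δ) :
    ∫ y in Ioo 0 δ, (2 - 2 * cos (ξ * y)) = 2 * δ - 2 * sin (ξ * δ) / ξ := by
  rw [← integral_Ioc_eq_integral_Ioo, ← intervalIntegral.integral_of_le hδ,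
    intervalIntegral.integral_sub intervalIntegrable_const
      ((by fun_prop : Continuous fun y => 2 * cos (ξ * y)).intervalIntegrable 0 δ),
    intervalIntegral.integral_const_mul,
    intervalIntegral.integral_comp_mul_left (fun y => cos y) hξ]
  simp only [intervalIntegral.integral_const, sub_zero, smul_eq_mul, mul_zero, integral_cos,
    sin_zero]
  field_simp

lemma le_integral_Ioo_two_sub_two_cos {ξ δ : ℝ} (hδ : 0 < δ) (hξ : 2 / δ ≤ |ξ|) :
    δ ≤ ∫ y in Ioo 0 δ, (2 - 2 * cos (ξ * y)) := by
  have hξpos : 0 < |ξ| := (by positivity : 0 < 2 / δ).trans_le hξ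
  rw [integral_Ioo_two_sub_two_cos ξ δ (abs_pos.1 hξpos) hδ.le]
  have hsin : |2 * sin (ξ * δ) / ξ| ≤ δ := by
    rw [abs_div, div_le_iff₀ hξpos, abs_mul, abs_two]
    calc 2 * |sin (ξ * δ)| ≤ 2 * 1 := by gcongr; exact abs_sin_le_one _
      _ ≤ δ * |ξ| := by rw [div_le_iff₀ hδ] at hξ; linarith
  linarith [le_abs_self (2 * sin (ξ * δ) / ξ)]

lemma integrable_two_sub_two_cos_mul_prod {Φ : ℝ → ℝ} (hΦ : Integrable Φ) (μ : Measure ℝ)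
    [IsFiniteMeasure μ] :
    Integrable (fun p : ℝ × ℝ => (2 - 2 * cos (p.2 * p.1)) * Φ p.2) (μ.prod volume) := by
  have hcos : Continuous fun p : ℝ × ℝ => 2 - 2 * cos (p.2 * p.1) := by fun_prop
  refine ((integrable_const (4 : ℝ)).mul_prod hΦ.norm).mono'
    (hcos.aestronglyMeasurable.mul hΦ.1.comp_snd) (.of_forall fun p => ?_)
  rw [norm_mul]
  gcongr
  rw [Real.norm_eq_abs, abs_le]
  constructor <;> linarith [neg_one_le_cos (p.2 * p.1), cos_le_one (p.2 * p.1)]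

/-- Integrate the hypothesis over `y ∈ (0, δ)` and swap the integrals: the averaged multiplier
`∫₀^δ (2 - 2 cos ξy) dy` is at least `δ` on `|ξ| ≥ 2/δ`. -/
theorem setIntegral_two_div_le_abs_le {Φ : ℝ → ℝ} (hΦ : 0 ≤ Φ) (hΦi : Integrable Φ) {δ η : ℝ}
    (hδ : 0 < δ) (h : ∀ y ∈ Ioo 0 δ, ∫ ξ, (2 - 2 * cos (ξ * y)) * Φ ξ ≤ η) :
    ∫ ξ in {ξ | 2 / δ ≤ |ξ|}, Φ ξ ≤ η := by
  set μ := volume.restrict (Ioo (0 : ℝ) δ)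
  set F : ℝ × ℝ → ℝ := fun p => (2 - 2 * cos (p.2 * p.1)) * Φ p.2
  have : IsFiniteMeasure μ := isFiniteMeasure_restrict.2 measure_Ioo_lt_top.ne
  have hF : Integrable F (μ.prod volume) := integrable_two_sub_two_cos_mul_prod hΦi μ
  have hinner (ξ : ℝ) : ∫ y, F (y, ξ) ∂μ = (∫ y in Ioo 0 δ, (2 - 2 * cos (ξ * y))) * Φ ξ :=
    integral_mul_const (Φ ξ) fun y => 2 - 2 * cos (ξ * y)
  have hS : MeasurableSet {ξ : ℝ | 2 / δ ≤ |ξ|} := measurableSet_le measurable_const measurable_abs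
  have key : δ * ∫ ξ in {ξ | 2 / δ ≤ |ξ|}, Φ ξ ≤ δ * η :=
    calc δ * ∫ ξ in {ξ | 2 / δ ≤ |ξ|}, Φ ξ = ∫ ξ in {ξ | 2 / δ ≤ |ξ|}, δ * Φ ξ :=
          (integral_const_mul _ _).symm
      _ ≤ ∫ ξ in {ξ | 2 / δ ≤ |ξ|}, ∫ y, F (y, ξ) ∂μ := by
          refine setIntegral_mono_on (hΦi.const_mul δ).integrableOn
            hF.integral_prod_right.integrableOn hS fun ξ hξ => ?_
          rw [hinner]
          exact mul_le_mul_of_nonneg_right (le_integral_Ioo_two_sub_two_cos hδ hξ) (hΦ ξ)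
      _ ≤ ∫ ξ, ∫ y, F (y, ξ) ∂μ := by
          refine setIntegral_le_integral hF.integral_prod_right (.of_forall fun ξ => ?_)
          beta_reduce
          rw [Pi.zero_apply, hinner]
          exact mul_nonneg (setIntegral_nonneg measurableSet_Ioo fun y _ => by
            linarith [cos_le_one (ξ * y)]) (hΦ ξ)
      _ = ∫ y, ∫ ξ, F (y, ξ) ∂volume ∂μ := (integral_integral_swap hF).symm
      _ ≤ ∫ _ in Ioo 0 δ, η :=
          setIntegral_mono_on hF.integral_prod_left (integrableOn_const measure_Ioo_lt_top.ne)
            measurableSet_Ioo h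
      _ = δ * η := by simp [hδ.le]
  exact le_of_mul_le_mul_left key hδ

/-- The Fourier multiplier of the squared `E^σ_{σ,κ}` norm. -/
noncomputable def eWeight (σ κ ξ : ℝ) : ℝ := |ξ| ^ (2 * σ) * (4 * κ ^ 2 + ξ ^ 2) ^ (-σ)

section eWeight

variable {σ κ ξ : ℝ}

lemma eWeight_nonneg : 0 ≤ eWeight σ κ ξ := by unfold eWeight; positivity

lemma eWeight_eq_div_rpow (hκ : κ ≠ 0) : eWeight σ κ ξ = (ξ ^ 2 / (4 * κ ^ 2 + ξ ^ 2)) ^ σ := by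
  have hpos : 0 < 4 * κ ^ 2 + ξ ^ 2 := by positivity
  rw [eWeight, rpow_mul (abs_nonneg ξ), rpow_two, sq_abs, rpow_neg hpos.le,
    div_rpow (sq_nonneg ξ) hpos.le, div_eq_mul_inv]

lemma eWeight_le_one (hσ : 0 ≤ σ) (hκ : κ ≠ 0) : eWeight σ κ ξ ≤ 1 := by
  rw [eWeight_eq_div_rpow hκ]
  exact rpow_le_one (by positivity) (div_le_one_of_le₀ (by nlinarith [sq_pos_of_ne_zero hκ])
    (by positivity)) hσ

lemma eWeight_le_of_abs_le {R : ℝ} (hσ : 0 ≤ σ) (hκ : κ ≠ 0) (hξ : |ξ| ≤ R) :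
    eWeight σ κ ξ ≤ (R ^ 2 / (4 * κ ^ 2)) ^ σ := by
  rw [eWeight_eq_div_rpow hκ]
  have hξR : ξ ^ 2 ≤ R ^ 2 := by
    rw [← sq_abs]; exact pow_le_pow_left₀ (abs_nonneg ξ) hξ 2
  exact rpow_le_rpow (by positivity)
    (div_le_div₀ (sq_nonneg R) hξR (by positivity) (by nlinarith [sq_nonneg ξ])) hσ

lemma measurable_eWeight : Measurable (eWeight σ κ) := by unfold eWeight; fun_prop

lemma tendsto_div_sq_rpow_atTop (hσ : 0 < σ) (R : ℝ) :
    Tendsto (fun κ : ℝ => (R ^ 2 / (4 * κ ^ 2)) ^ σ) atTop (𝓝 0) := by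
  have h : Tendsto (fun κ : ℝ => R ^ 2 / (4 * κ ^ 2)) atTop (𝓝 0) :=
    tendsto_const_nhds.div_atTop ((tendsto_pow_atTop two_ne_zero).const_mul_atTop (by norm_num))
  simpa [Function.comp_def, zero_rpow hσ.ne'] using
    (continuousAt_rpow_const 0 σ (Or.inr hσ.le)).tendsto.comp h

end eWeight

theorem integral_eWeight_mul_le {σ κ : ℝ} (hσ : 0 ≤ σ) (hκ : κ ≠ 0) {Φ : ℝ → ℝ} (hΦ : 0 ≤ Φ)
    (hΦi : Integrable Φ) (R : ℝ) :
    ∫ ξ, eWeight σ κ ξ * Φ ξ ≤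
      (∫ ξ in {ξ | R ≤ |ξ|}, Φ ξ) + (R ^ 2 / (4 * κ ^ 2)) ^ σ * ∫ ξ, Φ ξ := by
  have hS : MeasurableSet {ξ : ℝ | R ≤ |ξ|} := measurableSet_le measurable_const measurable_abs
  have hpoint (ξ : ℝ) :
      eWeight σ κ ξ * Φ ξ ≤ {ξ | R ≤ |ξ|}.indicator Φ ξ + (R ^ 2 / (4 * κ ^ 2)) ^ σ * Φ ξ := by
    by_cases hξ : R ≤ |ξ|
    · rw [indicator_of_mem (by exact hξ)]
      exact (mul_le_of_le_one_left (hΦ ξ) (eWeight_le_one hσ hκ)).trans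
        (le_add_of_nonneg_right (mul_nonneg (by positivity) (hΦ ξ)))
    · rw [indicator_of_notMem (by exact hξ), zero_add]
      exact mul_le_mul_of_nonneg_right (eWeight_le_of_abs_le hσ hκ (not_le.1 hξ).le) (hΦ ξ)
  have hWΦ : Integrable fun ξ => eWeight σ κ ξ * Φ ξ :=
    hΦi.bdd_mul (c := 1) measurable_eWeight.aestronglyMeasurable (.of_forall fun ξ => by
      rw [Real.norm_eq_abs, abs_of_nonneg eWeight_nonneg]; exact eWeight_le_one hσ hκ)
  refine (integral_mono hWΦ ((hΦi.indicator hS).add (hΦi.const_mul _)) hpoint).trans_eq ?_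
  rw [integral_add' (hΦi.indicator hS) (hΦi.const_mul _), integral_indicator hS,
    integral_const_mul]

/-- **Equicontinuity and the `E^σ_{σ,κ}` norms.** If `Q` is an `L²`-bounded,
`L²`-equicontinuous family of Schwartz functions and `σ > 0`, then
`sup_{q∈Q} ∫ |ξ|^{2σ}(4κ²+ξ²)^{-σ}|q̂(ξ)|² dξ → 0` as `κ → ∞`. -/
theorem stmt_13 (σ : ℝ) (hσ : 0 < σ) (Q : Set (SchwartzMap ℝ ℂ))
    (hbdd : ∃ M : ℝ, ∀ q ∈ Q, (∫ x : ℝ, ‖q x‖ ^ 2) ≤ M)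
    (hequi : ∀ ε : ℝ, 0 < ε → ∃ δ : ℝ, 0 < δ ∧ ∀ q ∈ Q, ∀ y : ℝ, |y| < δ →
      Real.sqrt (∫ x : ℝ, ‖q (x + y) - q x‖ ^ 2) < ε) :
    ∀ ε : ℝ, 0 < ε → ∃ κ₀ : ℝ, ∀ κ : ℝ, κ₀ ≤ κ → ∀ q ∈ Q,
      (∫ ξ : ℝ, |ξ| ^ (2 * σ) * (4 * κ ^ 2 + ξ ^ 2) ^ (-σ) * ‖fhat (⇑q) ξ‖ ^ 2) < ε := by
  intro ε hε
  obtain ⟨M, hM⟩ := hbdd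
  obtain ⟨δ, hδ, hmod⟩ := hequi √(ε / 2) (by positivity)
  have hlow : Tendsto (fun κ : ℝ => ((2 / δ) ^ 2 / (4 * κ ^ 2)) ^ σ * max M 0) atTop (𝓝 0) := by
    simpa using (tendsto_div_sq_rpow_atTop hσ (2 / δ)).mul_const (max M 0)
  obtain ⟨κ₀, hκ₀⟩ :=
    eventually_atTop.1 ((hlow.eventually_lt_const (half_pos hε)).and (eventually_gt_atTop 0))
  refine ⟨κ₀, fun κ hκ q hq => ?_⟩
  obtain ⟨hsmall, hκpos⟩ := hκ₀ κ hκ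
  have hhigh : ∫ ξ in {ξ | 2 / δ ≤ |ξ|}, ‖fhat q ξ‖ ^ 2 ≤ ε / 2 := by
    refine setIntegral_two_div_le_abs_le (fun ξ => by positivity) (integrable_norm_fhat_sq q) hδ
      fun y hy => ?_
    have hy' := hmod q hq y (abs_lt.2 ⟨by linarith [hy.1], hy.2⟩)
    rw [Real.sqrt_lt' (by positivity), Real.sq_sqrt (by positivity)] at hy'
    rw [integral_two_sub_two_cos_mul_norm_fhat_sq]
    exact hy'.le
  have hmass : ∫ ξ, ‖fhat q ξ‖ ^ 2 ≤ max M 0 :=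
    (integral_norm_fhat_sq q).trans_le ((hM q hq).trans (le_max_left _ _))
  calc ∫ ξ, eWeight σ κ ξ * ‖fhat q ξ‖ ^ 2
      ≤ (∫ ξ in {ξ | 2 / δ ≤ |ξ|}, ‖fhat q ξ‖ ^ 2)
          + ((2 / δ) ^ 2 / (4 * κ ^ 2)) ^ σ * ∫ ξ, ‖fhat q ξ‖ ^ 2 :=
        integral_eWeight_mul_le hσ.le hκpos.ne' (fun ξ => by positivity)
          (integrable_norm_fhat_sq q) (2 / δ)
    _ ≤ ε / 2 + ((2 / δ) ^ 2 / (4 * κ ^ 2)) ^ σ * max M 0 := by gcongr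
    _ < ε := by linarith
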